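/- arXiv:1801.00875 — 5 statements merged into one kernel-verified Lean document; each statement's English description precedes it below -/
import Mathlib

section
/- Let d be a positive squarefree integer with d ≡ 3 (mod 4). Then the families p ↦ (1 − 1/p + 1/(p + χ(p))) (over all primes p) and p ↦ (1 − (χ(p)² + χ(p))/p² + 1/p³) (over all primes p) are multipliable over the primes, and ∏_{p prime} (1 − 1/p + 1/(p + χ(p))) · ∏_{p prime, p ∣ d} (1 + p⁻³)/(1 − p⁻²) = (π²/6) · ∏_{p prime} (1 − (χ(p)² + χ(p))/p² + 1/p³). -/
/-!
For `p ∤ d` one has `χ(p) = ±1`, and then the local factor identity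
`1 - 1/p + 1/(p + χ(p)) = (1 - p⁻²)⁻¹ (1 - (χ(p)² + χ(p))/p² + 1/p³)` is an identity of rational functions;
for `p ∣ d` one has `χ(p) = 0` (as `d` is odd), the left factor is `1`, and the correction
factor `(1 + p⁻³)/(1 - p⁻²)` restores the identity. All factors are `1 + O(p⁻²)`, so the products
converge, and the Euler product `∏_p (1 - p⁻²)⁻¹ = ζ(2) = π²/6` gives the constant.
-/

/-- The quadratic character attached to `ℚ(√-d)`, defined on primes:
`χ(2) = (-1)^((d²-1)/8)` and `χ(p) = (-d/p)` (Legendre symbol) for odd primes `p`;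
`0` off the primes. -/
noncomputable def chi (d : ℕ) (p : ℕ) : ℤ :=
  if hp : p.Prime then
    if p = 2 then (-1) ^ ((d ^ 2 - 1) / 8)
    else @legendreSym p ⟨hp⟩ (-(d : ℤ))
  else 0

lemma chi_eq_zero_of_dvd {d p : ℕ} (hd : Odd d) (hp : p.Prime) (hdvd : p ∣ d) :
    chi d p = 0 := by
  have hp2 : p ≠ 2 := by
    rintro rfl
    exact Nat.not_even_iff_odd.mpr hd (even_iff_two_dvd.mpr hdvd)
  have : Fact p.Prime := ⟨hp⟩
  rw [chi, dif_pos hp, if_neg hp2, legendreSym.eq_zero_iff]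
  push_cast
  rw [neg_eq_zero, ZMod.natCast_eq_zero_iff]
  exact hdvd

lemma chi_eq_one_or_neg_one {d p : ℕ} (hp : p.Prime) (hndvd : ¬ p ∣ d) :
    chi d p = 1 ∨ chi d p = -1 := by
  rw [chi, dif_pos hp]
  split_ifs
  · exact neg_one_pow_eq_or ℤ _
  · have : Fact p.Prime := ⟨hp⟩
    apply legendreSym.eq_one_or_neg_one
    push_cast
    rw [neg_ne_zero, Ne, ZMod.natCast_eq_zero_iff]
    exact hndvd

lemma abs_chi_le_one {d : ℕ} (hd : Odd d) (p : ℕ) : |chi d p| ≤ 1 := by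
  by_cases hp : p.Prime
  · by_cases hdvd : p ∣ d
    · simp [chi_eq_zero_of_dvd hd hp hdvd]
    · rcases chi_eq_one_or_neg_one hp hdvd with h | h <;> simp [h]
  · simp [chi, hp]

lemma summable_const_div_prime_sq (C : ℝ) :
    Summable (fun p : Nat.Primes => C / (p : ℝ) ^ 2) :=
  ((Real.summable_one_div_nat_pow.mpr one_lt_two).subtype {p | p.Prime}).mul_left C |>.congr
    fun p => by rw [Function.comp_apply]; ring

lemma multipliable_of_abs_sub_one_le {f : Nat.Primes → ℝ} (C : ℝ)
    (h : ∀ p, |f p - 1| ≤ C / (p : ℝ) ^ 2) : Multipliable f := by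
  simpa using Real.multipliable_one_add_of_summable
    ((summable_const_div_prime_sq C).of_norm_bounded h)

lemma abs_one_sub_inv_add_inv_add_sub_one_le {x c : ℝ} (hx : 2 ≤ x) (hc : |c| ≤ 1) :
    |1 - 1 / x + 1 / (x + c) - 1| ≤ 2 / x ^ 2 := by
  have hxc : x - 1 ≤ x + c := by linarith [neg_abs_le c]
  have hpos : 0 < x * (x + c) := by nlinarith
  have h : 1 - 1 / x + 1 / (x + c) - 1 = -c / (x * (x + c)) := by
    have : x + c ≠ 0 := by linarith
    field_simp; ring
  rw [h, abs_div, abs_neg, abs_of_pos hpos, div_le_div_iff₀ hpos (by positivity)]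
  nlinarith [abs_nonneg c]

lemma abs_one_sub_div_sq_add_inv_cube_sub_one_le {x c : ℝ} (hx : 2 ≤ x) (hc : |c| ≤ 1) :
    |1 - (c ^ 2 + c) / x ^ 2 + 1 / x ^ 3 - 1| ≤ 3 / x ^ 2 := by
  have hx0 : 0 < x := by linarith
  have h : 1 - (c ^ 2 + c) / x ^ 2 + 1 / x ^ 3 - 1 = (1 - (c ^ 2 + c) * x) / x ^ 3 := by
    field_simp; ring
  have hc2 : |(c ^ 2 + c) * x| ≤ 2 * x := by
    rw [abs_mul, abs_of_pos hx0]
    gcongr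
    rw [abs_le] at hc ⊢; constructor <;> nlinarith
  rw [h, abs_div, abs_of_pos (pow_pos hx0 3), div_le_div_iff₀ (by positivity) (by positivity)]
  calc |1 - (c ^ 2 + c) * x| * x ^ 2 ≤ (1 + 2 * x) * x ^ 2 := by
        gcongr
        exact (abs_sub _ _).trans (by rw [abs_one]; linarith)
    _ ≤ 3 * x ^ 3 := by nlinarith

lemma one_sub_inv_add_inv_add_eq {x c : ℝ} (hx : 2 ≤ x) (hc : c = 1 ∨ c = -1) :
    1 - 1 / x + 1 / (x + c) = (1 - x⁻¹ ^ 2)⁻¹ * (1 - (c ^ 2 + c) / x ^ 2 + 1 / x ^ 3) := by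
  have : x ^ 2 - 1 ≠ 0 := by nlinarith
  have : x - 1 ≠ 0 := by linarith
  rcases hc with rfl | rfl
  · field_simp; ring
  · rw [← sub_eq_add_neg]; field_simp; ring

lemma hasProd_inv_one_sub_inv_prime_sq :
    HasProd (fun p : Nat.Primes => (1 - (p : ℝ)⁻¹ ^ 2)⁻¹) (Real.pi ^ 2 / 6) := by
  rw [← Complex.isometry_ofReal.isEmbedding.isInducing.hasProd_iff (g := Complex.ofRealHom)]
  convert riemannZeta_eulerProduct_hasProd (s := 2) (by norm_num) using 1
  · ext p
    rw [show (-2 : ℂ) = -(2 : ℕ) by norm_num, Complex.cpow_neg, Complex.cpow_natCast]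
    simp
  · simp [riemannZeta_two]

lemma hasProd_ite_mem_primeFactors {M : Type*} [CommMonoid M] [TopologicalSpace M]
    (n : ℕ) (g : ℕ → M) :
    HasProd (fun p : Nat.Primes => if (p : ℕ) ∈ n.primeFactors then g p else 1)
      (∏ p ∈ n.primeFactors, g p) := by
  have hs : ∀ p ∉ n.primeFactors.subtype Nat.Prime,
      (fun p : Nat.Primes => if (p : ℕ) ∈ n.primeFactors then g p else 1) p = 1 := by
    intro p hp
    simp_all
  have : HasProd _ _ := hasProd_prod_of_ne_finset_one hs
  rwa [Finset.prod_subtype_eq_prod_filter (f := fun q => if q ∈ n.primeFactors then g q else 1),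
    Finset.filter_true_of_mem (fun q hq => Nat.prime_of_mem_primeFactors hq), Finset.prod_ite_mem,
    Finset.inter_self] at this

theorem leading_constant_identity_general (d : ℕ)
    (hmod : d % 4 = 3) :
    Multipliable (fun p : Nat.Primes =>
      (1 - 1 / (p.1 : ℝ) + 1 / ((p.1 : ℝ) + (chi d p.1 : ℝ)))) ∧
    Multipliable (fun p : Nat.Primes =>
      (1 - (((chi d p.1 : ℝ)) ^ 2 + (chi d p.1 : ℝ)) / (p.1 : ℝ) ^ 2 + 1 / (p.1 : ℝ) ^ 3)) ∧
    (∏' p : Nat.Primes, (1 - 1 / (p.1 : ℝ) + 1 / ((p.1 : ℝ) + (chi d p.1 : ℝ)))) *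
        (∏ p ∈ d.primeFactors, (1 + ((p : ℝ))⁻¹ ^ 3) / (1 - ((p : ℝ))⁻¹ ^ 2)) =
      (Real.pi ^ 2 / 6) *
        ∏' p : Nat.Primes,
          (1 - (((chi d p.1 : ℝ)) ^ 2 + (chi d p.1 : ℝ)) / (p.1 : ℝ) ^ 2 + 1 / (p.1 : ℝ) ^ 3) := by
  have hodd : Odd d := Nat.odd_iff.mpr (by omega)
  have hp2 (p : Nat.Primes) : (2 : ℝ) ≤ p := by exact_mod_cast p.2.two_le
  have hchi (p : Nat.Primes) : |(chi d p : ℝ)| ≤ 1 := by exact_mod_cast abs_chi_le_one hodd p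
  have hMa := multipliable_of_abs_sub_one_le 2
    fun p => abs_one_sub_inv_add_inv_add_sub_one_le (hp2 p) (hchi p)
  have hMb := multipliable_of_abs_sub_one_le 3
    fun p => abs_one_sub_div_sq_add_inv_cube_sub_one_le (hp2 p) (hchi p)
  refine ⟨hMa, hMb, (hMa.hasProd.mul (hasProd_ite_mem_primeFactors d _)).unique
    ((hasProd_inv_one_sub_inv_prime_sq.mul hMb.hasProd).congr_fun fun p => ?_)⟩
  by_cases hpd : (p : ℕ) ∈ d.primeFactors
  · rw [if_pos hpd, chi_eq_zero_of_dvd hodd p.2 (Nat.dvd_of_mem_primeFactors hpd), Int.cast_zero]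
    simp [div_eq_inv_mul]
  · have hndvd : ¬ (p : ℕ) ∣ d := fun h => hpd (Nat.mem_primeFactors.mpr ⟨p.2, h, hodd.pos.ne'⟩)
    rw [if_neg hpd, mul_one]
    refine one_sub_inv_add_inv_add_eq (hp2 p) ?_
    rcases chi_eq_one_or_neg_one p.2 hndvd with h | h <;> simp [h]

/-- The two Euler-type families are multipliable over the primes, and
`∏_p (1 - 1/p + 1/(p + χ(p))) · ∏_{p ∣ d} (1+p⁻³)/(1-p⁻²)
  = (π²/6) · ∏_p (1 - (χ(p)² + χ(p))/p² + 1/p³)`. -/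
theorem leading_constant_identity (d : ℕ) (hd : 0 < d) (hsq : Squarefree d)
    (hmod : d % 4 = 3) :
    Multipliable (fun p : Nat.Primes =>
      (1 - 1 / (p.1 : ℝ) + 1 / ((p.1 : ℝ) + (chi d p.1 : ℝ)))) ∧
    Multipliable (fun p : Nat.Primes =>
      (1 - (((chi d p.1 : ℝ)) ^ 2 + (chi d p.1 : ℝ)) / (p.1 : ℝ) ^ 2 + 1 / (p.1 : ℝ) ^ 3)) ∧
    (∏' p : Nat.Primes, (1 - 1 / (p.1 : ℝ) + 1 / ((p.1 : ℝ) + (chi d p.1 : ℝ)))) *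
        (∏ p ∈ d.primeFactors, (1 + ((p : ℝ))⁻¹ ^ 3) / (1 - ((p : ℝ))⁻¹ ^ 2)) =
      (Real.pi ^ 2 / 6) *
        ∏' p : Nat.Primes,
          (1 - (((chi d p.1 : ℝ)) ^ 2 + (chi d p.1 : ℝ)) / (p.1 : ℝ) ^ 2 + 1 / (p.1 : ℝ) ^ 3) :=
  leading_constant_identity_general d hmod
end

section
/- Let d be a positive squarefree integer, let r, s, u, v be integers with d = r·s and s·u − r·v = 1, and let m, c be integers. Set g = gcd(m,d). Then the greatest common divisor of the three integers (d/g)·(s + 2·m·v + c·r·v²), (m/g)·(r·v + s·u) + (d/g)·(1 + c·u·v), and (d/g)·(c·s·u² + 2·m·u + r) equals 1. -/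
/-!
Reduce modulo a prime `p` dividing all three numbers, where `m/g` and `d/g` stay coprime. Since
`(su + rv)² = (su - rv)² + 4duv = 1 + 4duv`, the number `su + rv` is a unit modulo every prime
divisor of `d`; so if `p ∣ d/g`, then `p ∤ m/g` and `p` cannot divide the middle number. Otherwise
`p` divides both quadratic cofactors, which forces `cuv ≡ 1` and then `c ≡ 0`.
-/

theorem sq_add_eq_one_add_four_mul_of_sub_eq_one {R : Type*} [CommRing R] {r s u v : R}
    (huv : s * u - r * v = 1) : (s * u + r * v) ^ 2 = 1 + 4 * (r * s) * u * v := by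
  linear_combination (s * u - r * v + 1) * huv

theorem false_of_coeffs_eq_zero {R : Type*} [CommRing R] [IsDomain R] {r s u v m c g d' m' : R}
    (huv : s * u - r * v = 1) (hrs : g * d' = r * s) (hm : m = g * m') (hcop : IsCoprime m' d')
    (hA : d' * (s + 2 * m * v + c * r * v ^ 2) = 0)
    (hB : m' * (r * v + s * u) + d' * (1 + c * u * v) = 0)
    (hC : d' * (c * s * u ^ 2 + 2 * m * u + r) = 0) : False := by
  have hsq := sq_add_eq_one_add_four_mul_of_sub_eq_one huv
  by_cases hd' : d' = 0
  · subst hd'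
    have hsum : s * u + r * v = 0 := by
      simpa [(isCoprime_zero_right.mp hcop).ne_zero, add_comm] using hB
    rw [← hrs, hsum] at hsq
    simp at hsq
  · have hA : s + 2 * m * v + c * r * v ^ 2 = 0 := (mul_eq_zero.mp hA).resolve_left hd'
    have hC : c * s * u ^ 2 + 2 * m * u + r = 0 := (mul_eq_zero.mp hC).resolve_left hd'
    have hcuv : c * u * v = 1 := by
      linear_combination v * hC - u * hA - (c * u * v - 1) * huv
    have hc : c * (s * u + r * v) + 2 * m = 0 := by
      linear_combination s * hC - r * hA - (c * (s * u + r * v) + 2 * m) * huv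
    have hm' : m' * (s * u + r * v) + 2 * d' = 0 := by
      linear_combination hB - d' * hcuv
    -- `c (su + rv)²` equals `c + 4d` by `hsq` and `hcuv`, and equals `4d` by `hc` and `hm'`.
    have hc0 : c = 0 := by
      linear_combination (s * u + r * v) * hc - 2 * g * hm' - 2 * (s * u + r * v) * hm
        - 4 * (r * s) * hcuv - c * hsq + 4 * hrs
    simp [hc0] at hcuv

theorem Int.gcd_gcd_eq_one_of_forall_zmod {a b c : ℤ}
    (h : ∀ p : ℕ, p.Prime → (a : ZMod p) = 0 → (b : ZMod p) = 0 → (c : ZMod p) = 0 → False) :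
    Int.gcd (Int.gcd a b) c = 1 := by
  refine Nat.eq_one_iff_not_exists_prime_dvd.mpr fun p hp hpg => h p hp ?_ ?_ ?_
  all_goals
    rw [ZMod.intCast_zmod_eq_zero_iff_dvd]
    have hpg : (p : ℤ) ∣ (Int.gcd (Int.gcd a b) c : ℤ) := Int.natCast_dvd_natCast.mpr hpg
  · exact hpg.trans ((Int.gcd_dvd_left _ _).trans (Int.gcd_dvd_left _ _))
  · exact hpg.trans ((Int.gcd_dvd_left _ _).trans (Int.gcd_dvd_right _ _))
  · exact hpg.trans (Int.gcd_dvd_right _ _)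

theorem gcd_three_eq_one_general (d : ℤ) (hd : 0 < d)
    (r s u v m c : ℤ) (hrs : d = r * s) (huv : s * u - r * v = 1) :
    Int.gcd
      (Int.gcd ((d / (Int.gcd m d : ℤ)) * (s + 2 * m * v + c * r * v ^ 2))
        ((m / (Int.gcd m d : ℤ)) * (r * v + s * u) +
          (d / (Int.gcd m d : ℤ)) * (1 + c * u * v)))
      ((d / (Int.gcd m d : ℤ)) * (c * s * u ^ 2 + 2 * m * u + r)) = 1 := by
  set g : ℤ := (Int.gcd m d : ℤ)
  have hd' : g * (d / g) = r * s := hrs ▸ Int.mul_ediv_cancel' (Int.gcd_dvd_right m d)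
  have hm : m = g * (m / g) := (Int.mul_ediv_cancel' (Int.gcd_dvd_left m d)).symm
  have hcop : IsCoprime (m / g) (d / g) := Int.isCoprime_iff_gcd_eq_one.mpr
    (Int.gcd_div_gcd_div_gcd (Int.gcd_pos_of_ne_zero_right m hd.ne'))
  refine Int.gcd_gcd_eq_one_of_forall_zmod fun p hp hA hB hC => ?_
  have : Fact p.Prime := ⟨hp⟩
  apply_fun (Int.cast : ℤ → ZMod p) at huv hd' hm
  push_cast at huv hd' hm hA hB hC
  exact false_of_coeffs_eq_zero huv hd' hm (hcop.map (Int.castRingHom (ZMod p))) hA hB hC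

/-- With `d = r·s` squarefree, `s·u - r·v = 1`, `g = gcd(m,d)`, the three integers
`(d/g)(s + 2mv + crv²)`, `(m/g)(rv + su) + (d/g)(1 + cuv)`, `(d/g)(csu² + 2mu + r)`
are coprime. -/
theorem gcd_three_eq_one (d : ℤ) (hd : 0 < d) (hsq : Squarefree d)
    (r s u v m c : ℤ) (hrs : d = r * s) (huv : s * u - r * v = 1) :
    Int.gcd
      (Int.gcd ((d / (Int.gcd m d : ℤ)) * (s + 2 * m * v + c * r * v ^ 2))
        ((m / (Int.gcd m d : ℤ)) * (r * v + s * u) +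
          (d / (Int.gcd m d : ℤ)) * (1 + c * u * v)))
      ((d / (Int.gcd m d : ℤ)) * (c * s * u ^ 2 + 2 * m * u + r)) = 1 :=
  gcd_three_eq_one_general d hd r s u v m c hrs huv
end

section
/- Let d be a positive squarefree integer and let a, b, c be integers with gcd(a, b, c) = 1. Set d₀ = gcd(a, b·d, c). If p is an odd prime such that p·d₀² divides d·(b²·d − a·c), then p does not divide d₀. -/
/-!
If `p ∣ d₀` then `p` divides `a`, `c` and `b d`, but not `b` (as `gcd(a, b, c) = 1`),
so `p ∣ d`. Then `p³ ∣ p d₀²` divides `d (b² d - a c)`, and `p³ ∣ a c d`, hence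
`p³ ∣ (b d)²` and so `p³ ∣ d²`. A squarefree `d` has `v_p(d²) ≤ 2`, a contradiction.
-/

theorem Squarefree.not_prime_pow_three_dvd_sq {M : Type*} [CommMonoidWithZero M]
    [IsCancelMulZero M] {d p : M} (hd : Squarefree d) (hp : Prime p) : ¬ p ^ 3 ∣ d ^ 2 := by
  intro h
  obtain ⟨e, rfl⟩ := hp.dvd_of_dvd_pow ((dvd_pow_self p three_ne_zero).trans h)
  have hpe : p ∣ e ^ 2 := by
    rwa [pow_succ', mul_pow, pow_two p, mul_assoc, mul_dvd_mul_iff_left hp.ne_zero,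
      mul_dvd_mul_iff_left hp.ne_zero] at h
  exact hp.not_isUnit (hd p (mul_dvd_mul_left p (hp.dvd_of_dvd_pow hpe)))

theorem odd_prime_not_dvd_d0_general (d : ℤ) (hsq : Squarefree d)
    (a b c : ℤ) (habc : Int.gcd (Int.gcd a b) c = 1)
    (p : ℕ) (hp : p.Prime)
    (hdvd : (p : ℤ) * (Int.gcd (Int.gcd a (b * d)) c : ℤ) ^ 2 ∣ d * (b ^ 2 * d - a * c)) :
    ¬ (p : ℤ) ∣ (Int.gcd (Int.gcd a (b * d)) c : ℤ) := by
  intro hpd₀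
  have hp' : Prime (p : ℤ) := Nat.prime_iff_prime_int.mp hp
  have hpa : (p : ℤ) ∣ a := hpd₀.trans ((Int.gcd_dvd_left _ _).trans (Int.gcd_dvd_left _ _))
  have hpbd : (p : ℤ) ∣ b * d :=
    hpd₀.trans ((Int.gcd_dvd_left _ _).trans (Int.gcd_dvd_right _ _))
  have hpc : (p : ℤ) ∣ c := hpd₀.trans (Int.gcd_dvd_right _ _)
  have hpb : ¬ (p : ℤ) ∣ b := fun hpb ↦ by
    have := Int.dvd_coe_gcd (Int.dvd_coe_gcd hpa hpb) hpc
    rw [habc, Nat.cast_one] at this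
    exact hp'.not_isUnit (isUnit_of_dvd_one this)
  have hpd : (p : ℤ) ∣ d := (hp'.dvd_mul.mp hpbd).resolve_left hpb
  have hp3 : (p : ℤ) ^ 3 ∣ b ^ 2 * d ^ 2 := by
    have h₁ : (p : ℤ) ^ 3 ∣ d * (b ^ 2 * d - a * c) :=
      (pow_succ' (p : ℤ) 2 ▸ mul_dvd_mul_left _ (pow_dvd_pow_of_dvd hpd₀ 2)).trans hdvd
    have h₂ : (p : ℤ) ^ 3 ∣ a * c * d :=
      pow_three' (p : ℤ) ▸ mul_dvd_mul (mul_dvd_mul hpa hpc) hpd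
    have hsum : b ^ 2 * d ^ 2 = d * (b ^ 2 * d - a * c) + a * c * d := by ring
    exact hsum ▸ dvd_add h₁ h₂
  exact hsq.not_prime_pow_three_dvd_sq hp'
    (hp'.pow_dvd_of_dvd_mul_left 3 (fun h ↦ hpb (hp'.dvd_of_dvd_pow h)) hp3)

/-- For `d` positive squarefree, `gcd(a,b,c) = 1`, `d₀ = gcd(a, bd, c)`, and `p` an odd prime
with `p·d₀² ∣ d·(b²d - ac)`, we have `p ∤ d₀`. -/
theorem odd_prime_not_dvd_d0 (d : ℤ) (hd : 0 < d) (hsq : Squarefree d)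
    (a b c : ℤ) (habc : Int.gcd (Int.gcd a b) c = 1)
    (p : ℕ) (hp : p.Prime) (hodd : Odd p)
    (hdvd : (p : ℤ) * (Int.gcd (Int.gcd a (b * d)) c : ℤ) ^ 2 ∣ d * (b ^ 2 * d - a * c)) :
    ¬ (p : ℤ) ∣ (Int.gcd (Int.gcd a (b * d)) c : ℤ) :=
  odd_prime_not_dvd_d0_general d hsq a b c habc p hp hdvd
end

section
/- Let a be a positive integer and let u, v be integers. Then there exist positive integers α₁, α₂ and an integer β with 0 ≤ β < α₁ such that α₁·α₂ = a / gcd(a, u, v) and, for all integers m, l: a divides u·m + v·l if and only if there exist integers m₀, l₀ with m = α₁·m₀ + β·l₀ and l = α₂·l₀. In other words, the subgroup {(m,l) ∈ ℤ² : a ∣ u·m + v·l} of ℤ² is exactly the image of ℤ² under the upper-triangular matrix [[α₁, β],[0, α₂]], and this subgroup has index a / gcd(a,u,v) in ℤ². -/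
/-!
Put `g = gcd(a, u)`, `d = gcd(g, v)` and write `a = α₁ g`, `u = g u'`, `g = α₂ d`, `v = d v'`,
so that `α₁` is coprime to `u'` and `α₂` to `v'`. If `a ∣ u m + v l` then `g ∣ d v' l`, hence
`α₂ ∣ l`; writing `l = α₂ l₀`, the condition becomes `α₁ ∣ u' m + v' l₀`. As `u'` is invertible
modulo `α₁`, there is `β` with `α₁ ∣ u' β + v'`, and the condition is then `m ≡ β l₀ (mod α₁)`.
-/

section CommRing

variable {R : Type*} [CommRing R]

theorem IsCoprime.dvd_mul_add_mul_iff_dvd_sub {n u w β : R} (h : IsCoprime n u)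
    (hβ : n ∣ u * β + w) (m l : R) : n ∣ u * m + w * l ↔ n ∣ m - β * l := by
  have hsplit : u * m + w * l = u * (m - β * l) + (u * β + w) * l := by ring
  rw [hsplit, dvd_add_left (hβ.mul_right l)]
  exact ⟨h.dvd_of_dvd_mul_left, (Dvd.dvd.mul_left · u)⟩

variable [IsDomain R]

theorem dvd_mul_add_mul_iff_exists_of_isCoprime {α₁ α₂ d u' v' : R} (hg : α₂ * d ≠ 0)
    (h₂ : IsCoprime α₂ v') (m l : R) :
    α₁ * (α₂ * d) ∣ α₂ * d * u' * m + d * v' * l ↔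
      ∃ l₀, l = α₂ * l₀ ∧ α₁ ∣ u' * m + v' * l₀ := by
  have hd : d ≠ 0 := right_ne_zero_of_mul hg
  have hsubst (l₀ : R) : α₂ * d * u' * m + d * v' * (α₂ * l₀) = α₂ * d * (u' * m + v' * l₀) := by
    ring
  constructor
  · intro h
    have hvl : α₂ * d ∣ d * v' * l :=
      (dvd_add_right (dvd_mul_of_dvd_left (dvd_mul_right _ _) m)).mp
        ((dvd_mul_left _ _).trans h)
    rw [mul_comm α₂, mul_assoc, mul_dvd_mul_iff_left hd] at hvl
    obtain ⟨l₀, rfl⟩ := h₂.dvd_of_dvd_mul_left hvl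
    rw [hsubst, mul_comm α₁, mul_dvd_mul_iff_left hg] at h
    exact ⟨l₀, rfl, h⟩
  · rintro ⟨l₀, rfl, h⟩
    rw [hsubst, mul_comm α₁]
    exact mul_dvd_mul_left _ h

theorem dvd_mul_add_mul_iff_exists_upperTriangular {α₁ α₂ d u' v' β : R} (hg : α₂ * d ≠ 0)
    (h₁ : IsCoprime α₁ u') (h₂ : IsCoprime α₂ v') (hβ : α₁ ∣ u' * β + v') (m l : R) :
    α₁ * (α₂ * d) ∣ α₂ * d * u' * m + d * v' * l ↔
      ∃ m₀ l₀, m = α₁ * m₀ + β * l₀ ∧ l = α₂ * l₀ := by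
  rw [dvd_mul_add_mul_iff_exists_of_isCoprime hg h₂, exists_comm]
  refine exists_congr fun l₀ => ?_
  rw [h₁.dvd_mul_add_mul_iff_dvd_sub hβ, exists_and_right, and_comm]
  exact and_congr_left' (exists_congr fun m₀ => sub_eq_iff_eq_add)

end CommRing

namespace Int

theorem exists_nonneg_lt_dvd_mul_add {n u : ℤ} (hn : 0 < n) (h : IsCoprime u n) (w : ℤ) :
    ∃ β, 0 ≤ β ∧ β < n ∧ n ∣ u * β + w := by
  obtain ⟨x, y, hxy⟩ := h
  refine ⟨(-x * w) % n, emod_nonneg _ hn.ne', emod_lt_of_pos _ hn,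
    w * y - u * ((-x * w) / n), ?_⟩
  rw [emod_def]
  linear_combination (-w) * hxy

theorem exists_eq_gcd_mul_isCoprime {n : ℕ} (hn : 0 < n) (x : ℤ) :
    ∃ x' : ℤ, x = gcd n x * x' ∧ IsCoprime ((n / gcd n x : ℕ) : ℤ) x' := by
  have hpos : 0 < gcd n x := gcd_pos_of_ne_zero_left x (by exact_mod_cast hn.ne')
  refine ⟨x / gcd n x, (Int.mul_ediv_cancel' (gcd_dvd_right _ _)).symm, ?_⟩
  rw [isCoprime_iff_gcd_eq_one, natCast_ediv]
  exact gcd_div_gcd_div_gcd hpos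

end Int

/-- The subgroup `{(m,l) ∈ ℤ² : a ∣ um + vl}` is the image of `ℤ²` under an upper-triangular
matrix `[[α₁, β],[0, α₂]]` with `0 ≤ β < α₁` and `α₁·α₂ = a / gcd(a,u,v)`. -/
theorem upper_triangular_sublattice (a : ℕ) (ha : 0 < a) (u v : ℤ) :
    ∃ (α₁ α₂ : ℕ) (β : ℤ), 0 < α₁ ∧ 0 < α₂ ∧ 0 ≤ β ∧ β < (α₁ : ℤ) ∧
      α₁ * α₂ = a / Int.gcd (Int.gcd (a : ℤ) u) v ∧
      ∀ m l : ℤ,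
        ((a : ℤ) ∣ u * m + v * l) ↔
          ∃ m₀ l₀ : ℤ, m = (α₁ : ℤ) * m₀ + β * l₀ ∧ l = (α₂ : ℤ) * l₀ := by
  set g := Int.gcd a u
  set d := Int.gcd g v
  have hg : 0 < g := Int.gcd_pos_of_ne_zero_left u (by exact_mod_cast ha.ne')
  have hd : 0 < d := Int.gcd_pos_of_ne_zero_left v (by exact_mod_cast hg.ne')
  have hga : g ∣ a := Int.natCast_dvd_natCast.mp (Int.gcd_dvd_left _ _)
  have hdg : d ∣ g := Int.natCast_dvd_natCast.mp (Int.gcd_dvd_left _ _)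
  have hα₁ : 0 < a / g := Nat.div_pos (Nat.le_of_dvd ha hga) hg
  have hα₂ : 0 < g / d := Nat.div_pos (Nat.le_of_dvd hg hdg) hd
  obtain ⟨u', hu, h₁⟩ := Int.exists_eq_gcd_mul_isCoprime ha u
  obtain ⟨v', hv, h₂⟩ := Int.exists_eq_gcd_mul_isCoprime hg v
  obtain ⟨β, hβ₀, hβ, hβdvd⟩ :=
    Int.exists_nonneg_lt_dvd_mul_add (by exact_mod_cast hα₁) h₁.symm v'
  refine ⟨a / g, g / d, β, hα₁, hα₂, hβ₀, hβ, Nat.div_mul_div hga hdg, fun m l => ?_⟩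
  have ha' : (a : ℤ) = (a / g : ℕ) * ((g / d : ℕ) * d) := by
    rw [← Nat.cast_mul, Nat.div_mul_cancel hdg, ← Nat.cast_mul, Nat.div_mul_cancel hga]
  have hu' : u = (g / d : ℕ) * d * u' := by
    rw [← Nat.cast_mul, Nat.div_mul_cancel hdg]; exact hu
  rw [ha', hu', hv]
  exact dvd_mul_add_mul_iff_exists_upperTriangular (by positivity) h₁ h₂ hβdvd m l
end

section
/- Let d be a positive squarefree integer with d ≡ 3 (mod 4), let a, b, c be integers with a ≠ 0, and let t, x, y, z be rational numbers. Write ω = i·√d ∈ ℂ (a square root of −d) and let O = ℤ[(1+ω)/2] be the subring of ℂ generated over ℤ by (1+ω)/2 (the ring of integers of ℚ(√−d)). Then the four complex numbers E₁₁ = t + x·ω − b·y·ω + b·d·z, E₁₂ = −(2·b·d/a)·x + (2·b²·d/a − c)·y − c·ω·z, E₂₁ = a·y − a·ω·z, and E₂₂ = t − x·ω + b·y·ω − b·d·z all lie in O if and only if the seven rational numbers 2·a·z, 2·c·z, a·y + a·z, 2·x − 2·b·y, t − x + b·y + b·d·z, t + x − b·y − b·d·z, and −(2·b·d/a)·(x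 − b·y) − c·y + c·z are all integers. -/
/-- `ω = i√d ∈ ℂ`, a square root of `-d`. -/
noncomputable def omegaC (d : ℕ) : ℂ := Complex.I * Real.sqrt d

/-- `O = ℤ[(1+ω)/2] ⊆ ℂ`, the ring of integers of `ℚ(√-d)` for `d ≡ 3 (mod 4)`. -/
noncomputable def ringOfInt (d : ℕ) : Subring ℂ :=
  Subring.closure {(1 + omegaC d) / 2}


lemma omega_sq (d : ℕ) : omegaC d ^ 2 = -(d : ℂ) := by
  simp only [omegaC]
  rw [mul_pow, Complex.I_sq]
  rw [← Complex.ofReal_pow, Real.sq_sqrt (Nat.cast_nonneg d)]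
  push_cast; ring

lemma omega_re (d : ℕ) : (omegaC d).re = 0 := by simp [omegaC]
lemma omega_im (d : ℕ) : (omegaC d).im = Real.sqrt d := by simp [omegaC]

lemma mem_ringOfInt (d : ℕ) (hmod : d % 4 = 3) (w : ℂ) (hw : w ∈ ringOfInt d) :
    ∃ m n : ℤ, w = m + n * ((1 + omegaC d) / 2) := by
  obtain ⟨e, he⟩ : (4 : ℤ) ∣ (d : ℤ) + 1 := by omega
  have hθ : ((1 + omegaC d) / 2) ^ 2 = (1 + omegaC d) / 2 - (e : ℂ) := by
    have hω := omega_sq d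
    have he' : ((d : ℂ) + 1) = 4 * e := by exact_mod_cast congrArg (Int.cast : ℤ → ℂ) he
    linear_combination (1/4 : ℂ) * hω - (1/4 : ℂ) * he'
  induction hw using Subring.closure_induction with
  | mem u hu => exact ⟨0, 1, by simp_all⟩
  | zero => exact ⟨0, 0, by simp⟩
  | one => exact ⟨1, 0, by simp⟩
  | add u v hu hv ihu ihv =>
      obtain ⟨m, n, rfl⟩ := ihu; obtain ⟨m', n', rfl⟩ := ihv
      exact ⟨m + m', n + n', by push_cast; ring⟩
  | neg u hu ihu =>
      obtain ⟨m, n, rfl⟩ := ihu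
      exact ⟨-m, -n, by push_cast; ring⟩
  | mul u v hu hv ihu ihv =>
      obtain ⟨m, n, rfl⟩ := ihu; obtain ⟨m', n', rfl⟩ := ihv
      refine ⟨m * m' - n * n' * e, m * n' + n * m' + n * n', ?_⟩
      push_cast
      linear_combination ((n : ℂ) * n') * hθ

lemma mem_ringOfInt_iff (d : ℕ) (hd : 0 < d) (hmod : d % 4 = 3) (u v : ℚ) :
    (u : ℂ) + (v : ℂ) * omegaC d ∈ ringOfInt d ↔
      (∃ k : ℤ, 2 * v = k) ∧ (∃ k : ℤ, u - v = k) := by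
  have hsd : Real.sqrt d ≠ 0 := by positivity
  constructor
  · intro hw
    obtain ⟨m, n, hmn⟩ := mem_ringOfInt d hmod _ hw
    have h : 2 * (u : ℂ) + 2 * (v : ℂ) * omegaC d = (2 * m + n : ℂ) + (n : ℂ) * omegaC d := by
      linear_combination 2 * hmn
    rw [Complex.ext_iff] at h
    obtain ⟨hre, him⟩ := h
    simp only [Complex.add_re, Complex.add_im, Complex.mul_re, Complex.mul_im,
      Complex.ofReal_re, Complex.ofReal_im, Complex.ratCast_re, Complex.ratCast_im,
      Complex.intCast_re, Complex.intCast_im, Complex.re_ofNat, Complex.im_ofNat,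
      omega_re, omega_im, mul_zero, zero_mul, mul_one, one_mul, sub_zero, add_zero,
      zero_add, zero_sub] at hre him
    have hv : 2 * (v : ℝ) = (n : ℝ) := mul_right_cancel₀ hsd him
    constructor
    · exact ⟨n, by exact_mod_cast hv⟩
    · refine ⟨m, ?_⟩
      have : (u : ℝ) - v = (m : ℝ) := by linarith
      exact_mod_cast this
  · rintro ⟨⟨n, hn⟩, ⟨m, hm⟩⟩
    have hθ : (1 + omegaC d) / 2 ∈ ringOfInt d := Subring.subset_closure rfl
    have key : (u : ℂ) + (v : ℂ) * omegaC d = (m : ℤ) + (n : ℤ) * ((1 + omegaC d) / 2) := by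
      have hnc : (2 * (v : ℂ)) = (n : ℂ) := by exact_mod_cast congrArg (Rat.cast : ℚ → ℂ) hn
      have hmc : ((u : ℂ) - v) = (m : ℂ) := by exact_mod_cast congrArg (Rat.cast : ℚ → ℂ) hm
      linear_combination hmc + (1/2 : ℂ) * hnc + (omegaC d / 2) * hnc
    rw [key]
    exact add_mem (intCast_mem _ m) (mul_mem (intCast_mem _ n) hθ)

/-- The four entries of `ρ'(t + xi + yj + zij)` lie in `O = ℤ[(1+√-d)/2]` iff the seven
rational numbers `2az, 2cz, ay+az, 2x-2by, t-x+by+bdz, t+x-by-bdz, -(2bd/a)(x-by)-cy+cz`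
are all integers. -/
theorem entries_integral_iff (d : ℕ) (hd : 0 < d) (hsq : Squarefree d) (hmod : d % 4 = 3)
    (a b c : ℤ) (ha : a ≠ 0) (t x y z : ℚ) :
    ((t : ℂ) + (x : ℂ) * omegaC d - (b : ℂ) * (y : ℂ) * omegaC d + (b : ℂ) * (d : ℂ) * (z : ℂ)
        ∈ ringOfInt d ∧
      -(2 * (b : ℂ) * (d : ℂ) / (a : ℂ)) * (x : ℂ) +
          (2 * (b : ℂ) ^ 2 * (d : ℂ) / (a : ℂ) - (c : ℂ)) * (y : ℂ) -
          (c : ℂ) * omegaC d * (z : ℂ) ∈ ringOfInt d ∧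
      (a : ℂ) * (y : ℂ) - (a : ℂ) * omegaC d * (z : ℂ) ∈ ringOfInt d ∧
      (t : ℂ) - (x : ℂ) * omegaC d + (b : ℂ) * (y : ℂ) * omegaC d -
          (b : ℂ) * (d : ℂ) * (z : ℂ) ∈ ringOfInt d) ↔
    ((∃ k : ℤ, 2 * (a : ℚ) * z = k) ∧
      (∃ k : ℤ, 2 * (c : ℚ) * z = k) ∧
      (∃ k : ℤ, (a : ℚ) * y + (a : ℚ) * z = k) ∧
      (∃ k : ℤ, 2 * x - 2 * (b : ℚ) * y = k) ∧
      (∃ k : ℤ, t - x + (b : ℚ) * y + (b : ℚ) * (d : ℚ) * z = k) ∧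
      (∃ k : ℤ, t + x - (b : ℚ) * y - (b : ℚ) * (d : ℚ) * z = k) ∧
      (∃ k : ℤ, -(2 * (b : ℚ) * (d : ℚ) / (a : ℚ)) * (x - (b : ℚ) * y) -
          (c : ℚ) * y + (c : ℚ) * z = k)) := by
  have h11 : (t : ℂ) + (x : ℂ) * omegaC d - (b : ℂ) * (y : ℂ) * omegaC d
      + (b : ℂ) * (d : ℂ) * (z : ℂ)
      = ((t + b * d * z : ℚ) : ℂ) + ((x - b * y : ℚ) : ℂ) * omegaC d := by push_cast; ring
  have h12 : -(2 * (b : ℂ) * (d : ℂ) / (a : ℂ)) * (x : ℂ) +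
        (2 * (b : ℂ) ^ 2 * (d : ℂ) / (a : ℂ) - (c : ℂ)) * (y : ℂ) -
        (c : ℂ) * omegaC d * (z : ℂ)
      = ((-(2 * b * d / a) * x + (2 * b ^ 2 * d / a - c) * y : ℚ) : ℂ)
        + ((-(c * z) : ℚ) : ℂ) * omegaC d := by push_cast; ring
  have h21 : (a : ℂ) * (y : ℂ) - (a : ℂ) * omegaC d * (z : ℂ)
      = ((a * y : ℚ) : ℂ) + ((-(a * z) : ℚ) : ℂ) * omegaC d := by push_cast; ring
  have h22 : (t : ℂ) - (x : ℂ) * omegaC d + (b : ℂ) * (y : ℂ) * omegaC d -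
        (b : ℂ) * (d : ℂ) * (z : ℂ)
      = ((t - b * d * z : ℚ) : ℂ) + ((-(x - b * y) : ℚ) : ℂ) * omegaC d := by push_cast; ring
  rw [h11, h12, h21, h22, mem_ringOfInt_iff d hd hmod, mem_ringOfInt_iff d hd hmod,
    mem_ringOfInt_iff d hd hmod, mem_ringOfInt_iff d hd hmod]
  constructor
  · rintro ⟨⟨⟨k4, h4⟩, ⟨k5, h5⟩⟩, ⟨⟨k2, h2⟩, ⟨k7, h7⟩⟩, ⟨⟨k1, h1⟩, ⟨k3, h3⟩⟩, ⟨_, ⟨k6, h6⟩⟩⟩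
    exact ⟨⟨-k1, by push_cast; linear_combination -h1⟩,
      ⟨-k2, by push_cast; linear_combination -h2⟩,
      ⟨k3, by linear_combination h3⟩,
      ⟨k4, by linear_combination h4⟩,
      ⟨k5, by linear_combination h5⟩,
      ⟨k6, by linear_combination h6⟩,
      ⟨k7, by linear_combination h7⟩⟩
  · rintro ⟨⟨k1, h1⟩, ⟨k2, h2⟩, ⟨k3, h3⟩, ⟨k4, h4⟩, ⟨k5, h5⟩, ⟨k6, h6⟩, ⟨k7, h7⟩⟩
    exact ⟨⟨⟨k4, by linear_combination h4⟩, ⟨k5, by linear_combination h5⟩⟩,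
      ⟨⟨-k2, by push_cast; linear_combination -h2⟩, ⟨k7, by linear_combination h7⟩⟩,
      ⟨⟨-k1, by push_cast; linear_combination -h1⟩, ⟨k3, by linear_combination h3⟩⟩,
      ⟨⟨-k4, by push_cast; linear_combination -h4⟩, ⟨k6, by linear_combination h6⟩⟩⟩
end
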